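/- arXiv:1010.4920 — 7 statements merged into one kernel-verified Lean document; each statement's English description precedes it below -/
import Mathlib

section
/- Let q1, q2, r1, r2, s1, s2 > 0 with q1 ≥ q2, r1 ≥ r2, s1 ≥ s2. Define Q1 = (1+1/q1)(1+1/r1)(1+1/s1), Q2 = (1+1/q2)(1+1/r2)(1+1/s2), Q1' = (1+1/q1)(1+1/r2)(1+1/s1), Q2' = (1+1/q2)(1+1/r1)(1+1/s2). Then (Q1−1)(Q2−1) ≤ (Q1'−1)(Q2'−1). -/
lemma aux (a b c d e f : ℝ) (ha : 0 < a) (hb : 0 < b) (hc : 0 < c) (hd : 0 < d)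
    (he : 0 < e) (hf : 0 < f) (hab : a ≤ b) (hcd : c ≤ d) (hef : e ≤ f) :
    ((1+a)*(1+c)*(1+e)-1)*((1+b)*(1+d)*(1+f)-1) ≤
    ((1+a)*(1+d)*(1+e)-1)*((1+b)*(1+c)*(1+f)-1) := by
  nlinarith [mul_nonneg (sub_nonneg.2 hab) (sub_nonneg.2 hcd), mul_nonneg (sub_nonneg.2 hcd) (sub_nonneg.2 hef), mul_nonneg (sub_nonneg.2 hab) (sub_nonneg.2 hef), mul_pos ha he, mul_pos hb hf, mul_nonneg (mul_nonneg (sub_nonneg.2 hab) (sub_nonneg.2 hcd)) (sub_nonneg.2 hef), sq_nonneg (a-b), mul_pos ha hf, mul_pos hb he, mul_nonneg (mul_nonneg ha.le he.le) (mul_nonneg (sub_nonneg.2 hcd) (sub_nonneg.2 hef))]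

theorem stmt_0 (q1 q2 r1 r2 s1 s2 : ℝ)
    (hq1 : 0 < q1) (hq2 : 0 < q2) (hr1 : 0 < r1) (hr2 : 0 < r2)
    (hs1 : 0 < s1) (hs2 : 0 < s2)
    (hq : q1 ≥ q2) (hr : r1 ≥ r2) (hs : s1 ≥ s2) :
    ((1 + 1/q1) * (1 + 1/r1) * (1 + 1/s1) - 1) *
      ((1 + 1/q2) * (1 + 1/r2) * (1 + 1/s2) - 1) ≤
    ((1 + 1/q1) * (1 + 1/r2) * (1 + 1/s1) - 1) *
      ((1 + 1/q2) * (1 + 1/r1) * (1 + 1/s2) - 1) := by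
  exact aux (1/q1) (1/q2) (1/r1) (1/r2) (1/s1) (1/s2)
    (by positivity) (by positivity) (by positivity) (by positivity) (by positivity) (by positivity)
    (one_div_le_one_div_of_le hq2 hq) (one_div_le_one_div_of_le hr2 hr) (one_div_le_one_div_of_le hs2 hs)
end

section
/- Let q1, q2, r1, r2, s1, s2 > 0 with q1 ≥ q2, r1 ≥ r2, s1 ≥ s2. Define Q1 = (1+1/q1)(1+1/r1)(1+1/s1), Q2 = (1+1/q2)(1+1/r2)(1+1/s2), Q1' = (1+1/q1)(1+1/r2)(1+1/s1), Q2' = (1+1/q2)(1+1/r1)(1+1/s2). Then (1 + 1/(Q1−1))·(1 + 1/(Q2−1)) ≥ (1 + 1/(Q1'−1))·(1 + 1/(Q2'−1)). -/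
lemma one_add_one_div_sub_one {x : ℝ} (hx : x - 1 ≠ 0) : 1 + 1 / (x - 1) = x / (x - 1) := by
  field_simp
  ring

/-- Since `1 + 1/(x - 1) = x/(x - 1)`, both sides have the numerator `A * B * u * v`, and the
denominators differ by `(B - A) * (v - u)`. -/
lemma one_add_one_div_mul_sub_one_le {A B u v : ℝ} (hA : 1 < A) (hu : 1 < u)
    (hAB : A ≤ B) (huv : u ≤ v) :
    (1 + 1 / (A * v - 1)) * (1 + 1 / (B * u - 1)) ≤
      (1 + 1 / (A * u - 1)) * (1 + 1 / (B * v - 1)) := by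
  have hAu : 1 < A * u := one_lt_mul_of_lt_of_le hA hu.le
  have hAv : 1 < A * v := one_lt_mul_of_lt_of_le hA (hu.trans_le huv).le
  have hBu : 1 < B * u := one_lt_mul_of_lt_of_le (hA.trans_le hAB) hu.le
  have hBv : 1 < B * v := one_lt_mul_of_lt_of_le (hA.trans_le hAB) (hu.trans_le huv).le
  have hden : (A * u - 1) * (B * v - 1) ≤ (A * v - 1) * (B * u - 1) := by
    linear_combination mul_add_mul_le_mul_add_mul hAB huv
  rw [one_add_one_div_sub_one (by linarith), one_add_one_div_sub_one (by linarith),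
    one_add_one_div_sub_one (by linarith), one_add_one_div_sub_one (by linarith),
    div_mul_div_comm, div_mul_div_comm, show A * v * (B * u) = A * u * (B * v) by ring]
  exact div_le_div_of_nonneg_left (by positivity) (mul_pos (by linarith) (by linarith)) hden

theorem stmt_1 (q1 q2 r1 r2 s1 s2 : ℝ)
    (hq1 : 0 < q1) (hq2 : 0 < q2) (hr1 : 0 < r1) (hr2 : 0 < r2)
    (hs1 : 0 < s1) (hs2 : 0 < s2)
    (hq : q1 ≥ q2) (hr : r1 ≥ r2) (hs : s1 ≥ s2) :
    (1 + 1 / ((1 + 1/q1) * (1 + 1/r1) * (1 + 1/s1) - 1)) *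
      (1 + 1 / ((1 + 1/q2) * (1 + 1/r2) * (1 + 1/s2) - 1)) ≥
    (1 + 1 / ((1 + 1/q1) * (1 + 1/r2) * (1 + 1/s1) - 1)) *
      (1 + 1 / ((1 + 1/q2) * (1 + 1/r1) * (1 + 1/s2) - 1)) := by
  have one_lt (t : ℝ) (ht : 0 < t) : 1 < 1 + 1 / t := lt_add_of_pos_right 1 (by positivity)
  have hA : 1 < (1 + 1/q1) * (1 + 1/s1) :=
    one_lt_mul_of_lt_of_le (one_lt q1 hq1) (one_lt s1 hs1).le
  have hAB : (1 + 1/q1) * (1 + 1/s1) ≤ (1 + 1/q2) * (1 + 1/s2) := by gcongr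
  have huv : 1 + 1/r1 ≤ 1 + 1/r2 := by gcongr
  have key := one_add_one_div_mul_sub_one_le hA (one_lt r1 hr1) hAB huv
  rw [mul_right_comm (1 + 1/q1) (1 + 1/r1), mul_right_comm (1 + 1/q2) (1 + 1/r2),
    mul_right_comm (1 + 1/q1) (1 + 1/r2), mul_right_comm (1 + 1/q2) (1 + 1/r1)]
  exact key
end

section
/- Let γ_{m,n} > 0 for m ∈ {1,2,3}, n ∈ {1,2} with γ_{m,1} ≥ γ_{m,2} for all m. Then (1 + min(γ_{1,1}, γ_{2,1}, γ_{3,1}))·(1 + min(γ_{1,2}, γ_{2,2}, γ_{3,2})) ≥ (1 + min(γ_{1,1}, γ_{2,2}, γ_{3,1}))·(1 + min(γ_{1,2}, γ_{2,1}, γ_{3,2})). -/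
theorem stmt_2 (g11 g21 g31 g12 g22 g32 : ℝ)
    (h11 : 0 < g11) (h21 : 0 < g21) (h31 : 0 < g31)
    (h12 : 0 < g12) (h22 : 0 < g22) (h32 : 0 < g32)
    (h1 : g11 ≥ g12) (h2 : g21 ≥ g22) (h3 : g31 ≥ g32) :
    (1 + min (min g11 g21) g31) * (1 + min (min g12 g22) g32) ≥
    (1 + min (min g11 g22) g31) * (1 + min (min g12 g21) g32) := by
  set a := min (min g11 g21) g31 with ha
  set b := min (min g12 g22) g32 with hb
  set c := min (min g11 g22) g31 with hc
  set d := min (min g12 g21) g32 with hd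
  have hca : c ≤ a :=
    le_min (le_min (min_le_of_left_le (min_le_left _ _))
      (le_trans (min_le_of_left_le (min_le_right _ _)) h2)) (min_le_right _ _)
  have hda : d ≤ a :=
    le_min (le_min (le_trans (min_le_of_left_le (min_le_left _ _)) h1)
      (min_le_of_left_le (min_le_right _ _))) (le_trans (min_le_right _ _) h3)
  have hbc : b ≤ c :=
    le_min (le_min (le_trans (min_le_of_left_le (min_le_left _ _)) h1)
      (min_le_of_left_le (min_le_right _ _))) (le_trans (min_le_right _ _) h3)
  have hbd : b ≤ d :=
    le_min (le_min (min_le_of_left_le (min_le_left _ _))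
      (le_trans (min_le_of_left_le (min_le_right _ _)) h2)) (min_le_right _ _)
  have hmin : min c d ≤ b := by
    refine le_min (le_min ?_ ?_) ?_
    · exact le_trans (min_le_right c d) (min_le_of_left_le (min_le_left _ _))
    · exact le_trans (min_le_left c d) (min_le_of_left_le (min_le_right _ _))
    · exact le_trans (min_le_right c d) (min_le_right _ _)
  have hbpos : 0 < 1 + b := by positivity
  rcases le_total c d with h | h
  · have hbeq : b = c := le_antisymm hbc (by simpa [min_eq_left h] using hmin)
    nlinarith
  · have hbeq : b = d := le_antisymm hbd (by simpa [min_eq_right h] using hmin)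
    nlinarith
end

section
/- Let γ_1 ≥ γ_2 > 0 and δ_1 ≥ δ_2 > 0. Define f(γ, δ) = ((1+1/γ)(1+1/δ) − 1)^{-1}. Then (1 + f(γ_1, δ_1))·(1 + f(γ_2, δ_2)) ≥ (1 + f(γ_1, δ_2))·(1 + f(γ_2, δ_1)). -/
theorem stmt_12 (g1 g2 d1 d2 : ℝ) (hg2 : 0 < g2) (hd2 : 0 < d2)
    (hg : g1 ≥ g2) (hd : d1 ≥ d2) :
    (1 + ((1 + 1/g1) * (1 + 1/d1) - 1)⁻¹) *
      (1 + ((1 + 1/g2) * (1 + 1/d2) - 1)⁻¹) ≥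
    (1 + ((1 + 1/g1) * (1 + 1/d2) - 1)⁻¹) *
      (1 + ((1 + 1/g2) * (1 + 1/d1) - 1)⁻¹) := by
  have hg1 : 0 < g1 := lt_of_lt_of_le hg2 hg
  have hd1 : 0 < d2 := hd2
  have hd1' : 0 < d1 := lt_of_lt_of_le hd2 hd
  have key : ∀ g d : ℝ, 0 < g → 0 < d →
      1 + ((1 + 1/g) * (1 + 1/d) - 1)⁻¹ = (g+1)*(d+1)/(g+d+1) := by
    intro g d hgp hdp
    have h : (1 + 1/g) * (1 + 1/d) - 1 = (g+d+1)/(g*d) := by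
      field_simp; ring
    rw [h, inv_div]
    field_simp
    ring
  rw [key g1 d1 hg1 hd1', key g2 d2 hg2 hd2, key g1 d2 hg1 hd2,
    key g2 d1 hg2 hd1']
  rw [div_mul_div_comm, div_mul_div_comm, ge_iff_le, div_le_div_iff₀ (by positivity) (by positivity)]
  nlinarith [mul_nonneg (mul_nonneg (sub_nonneg.2 hg) (sub_nonneg.2 hd)) (by positivity : (0:ℝ) ≤ (g1+1)*(d1+1)*(g2+1)*(d2+1))]
end

section
/- The function f(γ, δ) = γδ/(γ + δ + 1) on (0,∞)² is L-superadditive (supermodular): for γ_1 ≥ γ_2 > 0 and δ_1 ≥ δ_2 > 0, f(γ_1, δ_1) + f(γ_2, δ_2) ≥ f(γ_1, δ_2) + f(γ_2, δ_1). Moreover g(γ, δ) = log₂(1 + f(γ, δ)) is also supermodular on (0,∞)². -/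
theorem stmt_13 (g1 g2 d1 d2 : ℝ) (hg2 : 0 < g2) (hd2 : 0 < d2)
    (hg : g1 ≥ g2) (hd : d1 ≥ d2) :
    g1 * d1 / (g1 + d1 + 1) + g2 * d2 / (g2 + d2 + 1) ≥
      g1 * d2 / (g1 + d2 + 1) + g2 * d1 / (g2 + d1 + 1) ∧
    Real.logb 2 (1 + g1 * d1 / (g1 + d1 + 1)) +
      Real.logb 2 (1 + g2 * d2 / (g2 + d2 + 1)) ≥
    Real.logb 2 (1 + g1 * d2 / (g1 + d2 + 1)) +
      Real.logb 2 (1 + g2 * d1 / (g2 + d1 + 1)) := by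
  have hg1 : 0 < g1 := lt_of_lt_of_le hg2 hg
  have hd1 : 0 < d1 := lt_of_lt_of_le hd2 hd
  have h11 : 0 < g1 + d1 + 1 := by linarith
  have h12 : 0 < g1 + d2 + 1 := by linarith
  have h21 : 0 < g2 + d1 + 1 := by linarith
  have h22 : 0 < g2 + d2 + 1 := by linarith
  have hprod : 0 ≤ (g1 - g2) * (d1 - d2) :=
    mul_nonneg (by linarith) (by linarith)
  have key : (g1 + d1 + 1) * (g2 + d2 + 1) ≤ (g1 + d2 + 1) * (g2 + d1 + 1) := by
    nlinarith [hprod]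
  constructor
  · rw [ge_iff_le, div_add_div _ _ (ne_of_gt h12) (ne_of_gt h21),
      div_add_div _ _ (ne_of_gt h11) (ne_of_gt h22),
      div_le_div_iff₀ (by positivity) (by positivity)]
    nlinarith [hprod, mul_pos h11 h22, mul_pos h12 h21, mul_pos hg1 hd1,
      mul_pos hg2 hd2, mul_pos hg1 hd2, mul_pos hg2 hd1,
      mul_nonneg (mul_nonneg hprod hg2.le) hd2.le,
      mul_nonneg hprod hg2.le, mul_nonneg hprod hd2.le,
      mul_nonneg hprod (mul_pos hg2 hd2).le,
      mul_nonneg hprod (add_pos hg2 hd2).le]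
  · have e11 : 1 + g1 * d1 / (g1 + d1 + 1) = (1 + g1) * (1 + d1) / (g1 + d1 + 1) := by
      field_simp; ring
    have e12 : 1 + g1 * d2 / (g1 + d2 + 1) = (1 + g1) * (1 + d2) / (g1 + d2 + 1) := by
      field_simp; ring
    have e21 : 1 + g2 * d1 / (g2 + d1 + 1) = (1 + g2) * (1 + d1) / (g2 + d1 + 1) := by
      field_simp; ring
    have e22 : 1 + g2 * d2 / (g2 + d2 + 1) = (1 + g2) * (1 + d2) / (g2 + d2 + 1) := by
      field_simp; ring
    rw [e11, e12, e21, e22]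
    have hlog : Real.logb 2 ((g1 + d1 + 1) * (g2 + d2 + 1)) ≤
        Real.logb 2 ((g1 + d2 + 1) * (g2 + d1 + 1)) := by
      exact Real.logb_le_logb_of_le (by norm_num) (by positivity) key
    rw [Real.logb_mul (ne_of_gt h11) (ne_of_gt h22),
      Real.logb_mul (ne_of_gt h12) (ne_of_gt h21)] at hlog
    rw [Real.logb_div (by positivity) (ne_of_gt h11),
      Real.logb_div (by positivity) (ne_of_gt h22),
      Real.logb_div (by positivity) (ne_of_gt h12),
      Real.logb_div (by positivity) (ne_of_gt h21),
      Real.logb_mul (by positivity) (by positivity),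
      Real.logb_mul (by positivity) (by positivity),
      Real.logb_mul (by positivity) (by positivity),
      Real.logb_mul (by positivity) (by positivity)]
    linarith
end

section
/- Let N ∈ ℕ and let γ_{m,n} > 0 for m ∈ {1,2}, n ∈ {1,…,N}, with γ_{m,1} ≥ γ_{m,2} ≥ ⋯ ≥ γ_{m,N} for each m. Then for every permutation σ of {1,…,N}: ∑_{n=1}^N log₂(1 + min(γ_{1,n}, γ_{2,n})) ≥ ∑_{n=1}^N log₂(1 + min(γ_{1,n}, γ_{2,σ(n)})). -/
private lemma logb_supermod {a b c d : ℝ} (hc : 0 < c) (hd : 0 < d)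
    (hca : c ≤ a) (hdb : d ≤ b) :
    Real.logb 2 (1 + min a d) + Real.logb 2 (1 + min c b) ≤
      Real.logb 2 (1 + min a b) + Real.logb 2 (1 + min c d) := by
  have hkey : min (min a d) (min c b) = min c d := by
    rw [min_min_min_comm, min_eq_right hca, min_eq_left hdb]
  rcases le_total (min a d) (min c b) with h | h
  · have h1 : min c d = min a d := by rw [← hkey, min_eq_left h]
    have h2 : Real.logb 2 (1 + min c b) ≤ Real.logb 2 (1 + min a b) := by
      apply Real.logb_le_logb_of_le (by norm_num)
      · have : 0 < min c b := lt_min hc (lt_of_lt_of_le hd hdb)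
        linarith
      · have : min c b ≤ min a b := min_le_min hca le_rfl
        linarith
    rw [h1]; linarith
  · have h1 : min c d = min c b := by rw [← hkey, min_eq_right h]
    have h2 : Real.logb 2 (1 + min a d) ≤ Real.logb 2 (1 + min a b) := by
      apply Real.logb_le_logb_of_le (by norm_num)
      · have : 0 < min a d := lt_min (lt_of_lt_of_le hc hca) hd
        linarith
      · have : min a d ≤ min a b := min_le_min le_rfl hdb
        linarith
    rw [h1]; linarith

private lemma aux_sum (N : ℕ) (γ δ : Fin N → ℝ)
    (hγpos : ∀ n, 0 < γ n) (hδpos : ∀ n, 0 < δ n)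
    (hγ : ∀ i j : Fin N, i ≤ j → γ j ≤ γ i)
    (hδ : ∀ i j : Fin N, i ≤ j → δ j ≤ δ i) :
    ∀ k (σ : Equiv.Perm (Fin N)),
      (Finset.univ.filter fun n => σ n ≠ n).card ≤ k →
      ∑ n, Real.logb 2 (1 + min (γ n) (δ (σ n))) ≤
        ∑ n, Real.logb 2 (1 + min (γ n) (δ n)) := by
  intro k
  induction k with
  | zero =>
    intro σ hσ
    have hfix : ∀ n : Fin N, σ n = n := by
      intro n
      by_contra hne
      have hmem : n ∈ Finset.univ.filter fun n => σ n ≠ n := by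
        simp [hne]
      have := Finset.card_pos.mpr ⟨n, hmem⟩
      omega
    apply le_of_eq
    exact Finset.sum_congr rfl fun n _ => by rw [hfix n]
  | succ k ih =>
    intro σ hσ
    by_cases hid : ∀ n : Fin N, σ n = n
    · exact le_of_eq (Finset.sum_congr rfl fun n _ => by rw [hid n])
    push_neg at hid
    set S := Finset.univ.filter fun n => σ n ≠ n with hS
    have hSne : S.Nonempty := by
      obtain ⟨n, hn⟩ := hid
      exact ⟨n, by simp [hS, hn]⟩
    set i := S.min' hSne with hi
    have hiS : i ∈ S := S.min'_mem hSne
    have hiσ : σ i ≠ i := by simpa [hS] using hiS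
    set j := σ.symm i with hj
    have hσj : σ j = i := σ.apply_symm_apply i
    have hij : i ≠ j := by
      intro hh
      exact hiσ (by rw [hh, hσj]; exact hh)
    have hjS : j ∈ S := by
      simp only [hS, Finset.mem_filter, Finset.mem_univ, true_and]
      rw [hσj]
      exact hij
    have hilej : i ≤ j := S.min'_le j hjS
    have hσiS : σ i ∈ S := by
      simp only [hS, Finset.mem_filter, Finset.mem_univ, true_and]
      intro hh
      exact hiσ (σ.injective (by rw [hh]))
    have hileσi : i ≤ σ i := S.min'_le (σ i) hσiS
    set σ' := σ * Equiv.swap i j with hσ'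
    have hσ'i : σ' i = i := by
      simp [hσ', Equiv.swap_apply_left, hσj]
    have hσ'j : σ' j = σ i := by
      simp [hσ', Equiv.swap_apply_right]
    have hσ'other : ∀ n : Fin N, n ≠ i → n ≠ j → σ' n = σ n := by
      intro n hni hnj
      simp [hσ', Equiv.swap_apply_of_ne_of_ne hni hnj]
    -- support of σ' is contained in S.erase i
    have hsupp : (Finset.univ.filter fun n => σ' n ≠ n) ⊆ S.erase i := by
      intro n hn
      simp only [Finset.mem_filter, Finset.mem_univ, true_and] at hn
      have hni : n ≠ i := fun hh => hn (by rw [hh, hσ'i])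
      rcases eq_or_ne n j with rfl | hnj
      · exact Finset.mem_erase.mpr ⟨hni, hjS⟩
      · refine Finset.mem_erase.mpr ⟨hni, ?_⟩
        simp only [hS, Finset.mem_filter, Finset.mem_univ, true_and]
        rw [← hσ'other n hni hnj]
        exact hn
    have hcard : (Finset.univ.filter fun n => σ' n ≠ n).card ≤ k := by
      have h1 := Finset.card_le_card hsupp
      have h2 : (S.erase i).card = S.card - 1 := Finset.card_erase_of_mem hiS
      have h3 : 0 < S.card := Finset.card_pos.mpr hSne
      omega
    have hstep : ∑ n, Real.logb 2 (1 + min (γ n) (δ (σ n))) ≤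
        ∑ n, Real.logb 2 (1 + min (γ n) (δ (σ' n))) := by
      have hsub : ({i, j} : Finset (Fin N)) ⊆ Finset.univ := Finset.subset_univ _
      have e1 := Finset.sum_sdiff (f := fun n => Real.logb 2 (1 + min (γ n) (δ (σ n)))) hsub
      have e2 := Finset.sum_sdiff (f := fun n => Real.logb 2 (1 + min (γ n) (δ (σ' n)))) hsub
      have epair1 : ∑ n ∈ ({i, j} : Finset (Fin N)),
          Real.logb 2 (1 + min (γ n) (δ (σ n))) =
          Real.logb 2 (1 + min (γ i) (δ (σ i))) + Real.logb 2 (1 + min (γ j) (δ i)) := by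
        rw [Finset.sum_pair hij, hσj]
      have epair2 : ∑ n ∈ ({i, j} : Finset (Fin N)),
          Real.logb 2 (1 + min (γ n) (δ (σ' n))) =
          Real.logb 2 (1 + min (γ i) (δ i)) + Real.logb 2 (1 + min (γ j) (δ (σ i))) := by
        rw [Finset.sum_pair hij, hσ'i, hσ'j]
      have erest : ∑ n ∈ Finset.univ \ ({i, j} : Finset (Fin N)),
          Real.logb 2 (1 + min (γ n) (δ (σ n))) =
          ∑ n ∈ Finset.univ \ ({i, j} : Finset (Fin N)),
          Real.logb 2 (1 + min (γ n) (δ (σ' n))) := by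
        apply Finset.sum_congr rfl
        intro n hn
        simp only [Finset.mem_sdiff, Finset.mem_insert, Finset.mem_singleton] at hn
        push_neg at hn
        rw [hσ'other n hn.2.1 hn.2.2]
      have hsm := logb_supermod (a := γ i) (b := δ i) (c := γ j) (d := δ (σ i))
        (hγpos j) (hδpos (σ i)) (hγ i j hilej) (hδ i (σ i) hileσi)
      linarith [e1, e2, epair1, epair2, erest, hsm]
    exact le_trans hstep (ih σ' hcard)

theorem stmt_15 (N : ℕ) (γ δ : Fin N → ℝ)
    (hγpos : ∀ n, 0 < γ n) (hδpos : ∀ n, 0 < δ n)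
    (hγ : ∀ i j : Fin N, i ≤ j → γ j ≤ γ i)
    (hδ : ∀ i j : Fin N, i ≤ j → δ j ≤ δ i)
    (σ : Equiv.Perm (Fin N)) :
    ∑ n, Real.logb 2 (1 + min (γ n) (δ n)) ≥
      ∑ n, Real.logb 2 (1 + min (γ n) (δ (σ n))) := by
  exact aux_sum N γ δ hγpos hδpos hγ hδ
    (Finset.univ.filter fun n => σ n ≠ n).card σ le_rfl
end

section
/- Let N ∈ ℕ, and γ_{m,n} > 0 with γ_{m,1} ≥ ⋯ ≥ γ_{m,N} for each of m = 1, 2. Let f(γ, δ) = γδ/(γ+δ+1). Then for every permutation σ of {1,…,N}: ∑_{n=1}^N log₂(1 + f(γ_{1,n}, γ_{2,n})) ≥ ∑_{n=1}^N log₂(1 + f(γ_{1,n}, γ_{2,σ(n)})). -/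
/-!
Since `1 + ab/(a+b+1) = (1+a)(1+b)/(a+b+1)` and `(a₁+b₁+1)(a₂+b₂+1) ≤ (a₁+b₂+1)(a₂+b₁+1)` whenever
`a₂ ≤ a₁` and `b₂ ≤ b₁`, the rate `log₂(1 + f(a, b))` has increasing differences. For such a pairing
cost, moving the largest displaced index of a permutation back to its place by one transposition
does not decrease the sum and shrinks the support, so the identity pairing is optimal.
-/

open Finset Equiv Equiv.Perm Real

section Rearrangement

variable {ι β : Type*} [LinearOrder ι] [Fintype ι]
  [AddCommGroup β] [PartialOrder β] [IsOrderedAddMonoid β]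

lemma sum_apply_le_sum_apply_swap_mul (g : ι → ι → β)
    (hg : ∀ i j k l, i ≤ j → k ≤ l → g i l + g j k ≤ g i k + g j l)
    (σ : Perm ι) {i : ι} (hi : σ i ≠ i) (hmax : ∀ k ∈ σ.support, k ≤ i) :
    ∑ n, g n (σ n) ≤ ∑ n, g n ((swap i (σ i) * σ) n) := by
  set j := σ⁻¹ i
  have hσj : σ j = i := σ.apply_symm_apply i
  have hji : j ≠ i := fun h => hi (h ▸ hσj)
  have hj : j ≤ i := hmax j (mem_support.2 (hσj ▸ hji.symm))
  have hσi : σ i ≤ i := hmax _ (apply_mem_support.2 (mem_support.2 hi))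
  have hdiff : ∑ n, (g n ((swap i (σ i) * σ) n) - g n (σ n)) =
      (g i i - g i (σ i)) + (g j (σ i) - g j i) := by
    rw [Fintype.sum_eq_add i j hji.symm]
    · simp [hσj]
    · rintro n ⟨hni, hnj⟩
      have hσni : σ n ≠ i := fun h => hnj (σ.injective (h.trans hσj.symm))
      have hσnσi : σ n ≠ σ i := fun h => hni (σ.injective h)
      simp [swap_apply_of_ne_of_ne hσni hσnσi]
  have hexchange := hg j i (σ i) i hj hσi
  rw [← sub_nonneg, ← sum_sub_distrib, hdiff]
  convert sub_nonneg.2 hexchange using 1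
  abel

theorem sum_apply_perm_le_sum_apply_self (g : ι → ι → β)
    (hg : ∀ i j k l, i ≤ j → k ≤ l → g i l + g j k ≤ g i k + g j l) (σ : Perm ι) :
    ∑ n, g n (σ n) ≤ ∑ n, g n n := by
  induction hc : #σ.support using Nat.strong_induction_on generalizing σ with
  | _ c ih =>
    obtain rfl | hσ := eq_or_ne σ 1
    · simp
    have hne : σ.support.Nonempty := nonempty_iff_ne_empty.2 (support_eq_empty_iff.not.2 hσ)
    set i := σ.support.max' hne
    have hi : σ i ≠ i := mem_support.1 (σ.support.max'_mem hne)
    calc ∑ n, g n (σ n) ≤ ∑ n, g n ((swap i (σ i) * σ) n) :=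
          sum_apply_le_sum_apply_swap_mul g hg σ hi fun k hk => σ.support.le_max' k hk
      _ ≤ ∑ n, g n n := ih _ (hc ▸ card_support_swap_mul hi) _ rfl

end Rearrangement

lemma one_add_mul_div_eq {a b : ℝ} (h : a + b + 1 ≠ 0) :
    1 + a * b / (a + b + 1) = (1 + a) * (1 + b) / (a + b + 1) := by
  field_simp
  ring

lemma logb_one_add_mul_div_supermodular {a₁ a₂ b₁ b₂ : ℝ} (ha₂ : 0 ≤ a₂) (hb₂ : 0 ≤ b₂)
    (ha : a₂ ≤ a₁) (hb : b₂ ≤ b₁) :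
    logb 2 (1 + a₁ * b₂ / (a₁ + b₂ + 1)) + logb 2 (1 + a₂ * b₁ / (a₂ + b₁ + 1)) ≤
      logb 2 (1 + a₁ * b₁ / (a₁ + b₁ + 1)) + logb 2 (1 + a₂ * b₂ / (a₂ + b₂ + 1)) := by
  have ha₁ : 0 ≤ a₁ := ha₂.trans ha
  have hb₁ : 0 ≤ b₁ := hb₂.trans hb
  have hrate : ∀ a b : ℝ, 0 ≤ a → 0 ≤ b →
      1 + a * b / (a + b + 1) = (1 + a) * (1 + b) / (a + b + 1) :=
    fun a b ha hb => one_add_mul_div_eq (by positivity)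
  rw [hrate a₁ b₂ ha₁ hb₂, hrate a₂ b₁ ha₂ hb₁, hrate a₁ b₁ ha₁ hb₁, hrate a₂ b₂ ha₂ hb₂]
  rw [← logb_mul (by positivity) (by positivity), ← logb_mul (by positivity) (by positivity),
    div_mul_div_comm, div_mul_div_comm]
  apply logb_le_logb_of_le one_lt_two (by positivity)
  have hnum : (1 + a₁) * (1 + b₂) * ((1 + a₂) * (1 + b₁)) =
      (1 + a₁) * (1 + b₁) * ((1 + a₂) * (1 + b₂)) := by ring
  have hden : (a₁ + b₁ + 1) * (a₂ + b₂ + 1) ≤ (a₁ + b₂ + 1) * (a₂ + b₁ + 1) := by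
    nlinarith [mul_nonneg (sub_nonneg.2 ha) (sub_nonneg.2 hb)]
  rw [hnum]
  exact div_le_div_of_nonneg_left (by positivity) (by positivity) hden

theorem stmt_16 (N : ℕ) (γ δ : Fin N → ℝ)
    (hγpos : ∀ n, 0 < γ n) (hδpos : ∀ n, 0 < δ n)
    (hγ : ∀ i j : Fin N, i ≤ j → γ j ≤ γ i)
    (hδ : ∀ i j : Fin N, i ≤ j → δ j ≤ δ i)
    (σ : Equiv.Perm (Fin N)) :
    ∑ n, Real.logb 2 (1 + γ n * δ n / (γ n + δ n + 1)) ≥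
      ∑ n, Real.logb 2 (1 + γ n * δ (σ n) / (γ n + δ (σ n) + 1)) :=
  sum_apply_perm_le_sum_apply_self (fun n m => logb 2 (1 + γ n * δ m / (γ n + δ m + 1)))
    (fun _ j _ l hij hkl => logb_one_add_mul_div_supermodular (hγpos j).le (hδpos l).le
      (hγ _ _ hij) (hδ _ _ hkl)) σ
end
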